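/- arXiv:0712.0042 — 3 statements merged into one kernel-verified Lean document; each statement's English description precedes it below -/
import Mathlib

section
/- For every nonnegative integer r and real x with |x| < 1, the r-th derivative of the function x ↦ ∑_{t=0}^∞ x^t H(t) equals (r!/(1-x)^{r+1})·(H(r) - ln(1-x)), where H is the harmonic number function with H(0)=0. -/
/-- The `t`-th harmonic number, with `H(0) = 0`. -/
noncomputable def H (t : ℕ) : ℝ := ∑ ℓ ∈ Finset.range t, (1 : ℝ) / (ℓ + 1)

/-! Multiplying the series by `1 - x` telescopes it, since `H (t + 1) - H t = 1 / (t + 1)`, into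
the logarithmic series `∑ x^(t+1)/(t+1) = -log (1 - x)`; so the sum is `-log (1 - x) / (1 - x)`.
The same identity `H (r + 1) = H r + 1 / (r + 1)` shows that differentiating
`r! / (1 - x)^(r+1) * (H r - log (1 - x))` gives the same expression with `r + 1` in place of `r`,
and the `r = 0` case is the closed form. -/

open Filter Real
open scoped Nat

lemma H_zero : H 0 = 0 := by simp [H]

lemma H_succ (t : ℕ) : H (t + 1) = H t + 1 / (t + 1) := Finset.sum_range_succ _ _

lemma H_nonneg (t : ℕ) : 0 ≤ H t := Finset.sum_nonneg fun _ _ => by positivity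

lemma H_le_self (t : ℕ) : H t ≤ t := by
  calc H t ≤ ∑ _ℓ ∈ Finset.range t, (1 : ℝ) :=
        Finset.sum_le_sum fun ℓ _ => div_le_one_of_le₀ (by linarith [ℓ.cast_nonneg (α := ℝ)])
          (by positivity)
    _ = t := by simp

lemma summable_pow_mul_H {x : ℝ} (hx : |x| < 1) : Summable fun t : ℕ => x ^ t * H t := by
  refine Summable.of_norm_bounded
    (by simpa using summable_pow_mul_geometric_of_norm_lt_one 1 (r := |x|) (by simpa using hx))
    fun t => ?_
  rw [norm_mul, norm_pow, Real.norm_eq_abs, Real.norm_of_nonneg (H_nonneg t), mul_comm]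
  exact mul_le_mul_of_nonneg_right (H_le_self t) (by positivity)

lemma hasSum_pow_mul_H {x : ℝ} (hx : |x| < 1) :
    HasSum (fun t : ℕ => x ^ t * H t) (-log (1 - x) / (1 - x)) := by
  have hx1 : 1 - x ≠ 0 := by linarith [(abs_lt.1 hx).2]
  obtain ⟨S, hS⟩ := summable_pow_mul_H hx
  have hshift : HasSum (fun t : ℕ => x ^ (t + 1) * H (t + 1)) S := by
    simpa [H_zero] using (hasSum_nat_add_iff' 1).2 hS
  have hdiff : HasSum (fun t : ℕ => x ^ (t + 1) / (t + 1)) ((1 - x) * S) := by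
    rw [one_sub_mul]
    refine (hshift.sub (hS.mul_left x)).congr_fun fun t => ?_
    rw [H_succ]
    ring
  rwa [(hasSum_pow_div_log_of_abs_lt_one hx).unique hdiff, mul_div_cancel_left₀ _ hx1]

lemma hasDerivAt_factorial_div_mul_H_sub_log (r : ℕ) {y : ℝ} (hy : y ≠ 1) :
    HasDerivAt (fun z : ℝ => (r ! : ℝ) / (1 - z) ^ (r + 1) * (H r - log (1 - z)))
      (((r + 1) ! : ℝ) / (1 - y) ^ (r + 2) * (H (r + 1) - log (1 - y))) y := by
  have hy1 : 1 - y ≠ 0 := sub_ne_zero.2 hy.symm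
  have hlin : HasDerivAt (fun z : ℝ => 1 - z) (-1) y := by
    simpa using (hasDerivAt_id y).const_sub 1
  have hpow := (hlin.fun_pow (r + 1)).fun_inv (pow_ne_zero _ hy1)
  have hlog := (hasDerivAt_const y (H r)).fun_sub (hlin.log hy1)
  have hd : HasDerivAt (_ : ℝ → ℝ) _ y := (hpow.fun_mul hlog).const_mul (r ! : ℝ)
  convert hd using 1
  · funext z; ring
  · rw [H_succ, Nat.factorial_succ]
    field_simp
    push_cast
    ring

lemma iteratedDeriv_eq_of_hasDerivAt_succ {𝕜 E : Type*} [NontriviallyNormedField 𝕜]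
    [NormedAddCommGroup E] [NormedSpace 𝕜 E] {U : Set 𝕜} (hU : IsOpen U) {g : 𝕜 → E}
    {f : ℕ → 𝕜 → E} (hf : ∀ n, ∀ y ∈ U, HasDerivAt (f n) (f (n + 1) y) y)
    (hg : Set.EqOn g (f 0) U) (n : ℕ) : Set.EqOn (iteratedDeriv n g) (f n) U := by
  induction n with
  | zero => simpa using hg
  | succ n ih =>
    intro y hy
    rw [iteratedDeriv_succ, (eventuallyEq_of_mem (hU.mem_nhds hy) ih).deriv_eq]
    exact (hf n y hy).deriv

/-- For `|x| < 1`, the `r`-th derivative of `x ↦ ∑_{t=0}^∞ x^t H(t)` equals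
`(r!/(1-x)^{r+1}) (H(r) - ln(1-x))`. -/
theorem iteratedDeriv_harmonic_series (r : ℕ) (x : ℝ) (hx : |x| < 1) :
    iteratedDeriv r (fun y : ℝ => ∑' t : ℕ, y ^ t * H t) x =
      (Nat.factorial r : ℝ) / (1 - x) ^ (r + 1) * (H r - Real.log (1 - x)) := by
  have hU : IsOpen {y : ℝ | |y| < 1} := isOpen_lt continuous_abs continuous_const
  refine iteratedDeriv_eq_of_hasDerivAt_succ hU
    (fun n y hy => hasDerivAt_factorial_div_mul_H_sub_log n (abs_lt.1 hy).2.ne)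
    (fun y hy => ?_) r hx
  simp [(hasSum_pow_mul_H hy).tsum_eq, H_zero, div_eq_inv_mul]
end

section
/- For real α > 0, b > 0 and a positive integer q, ∫_0^∞ ln(1 + α λ) λ^{q-1} e^{-bλ} dλ = (q-1)! · e^{b/α} · b^{-q} · ∑_{h=1}^q E_h(b/α), where E_h(z) = ∫_1^∞ e^{-zt}/t^h dt is the generalized exponential integral. -/
/-!
Write `L n = ∫₀^∞ log (1 + α l) lⁿ e^{-bl} dl` and `J n = ∫₀^∞ α lⁿ / (1 + α l) e^{-bl} dl`.
Integrating by parts against `log (1 + α l)` gives `b L n = n L (n - 1) + J n`. Writing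
`α l^{n+1} / (1 + α l) = lⁿ - lⁿ / (1 + α l)` gives `J (n + 1) = n! / b^{n+1} - J n / α`, while the
substitution `t = 1 + α l` gives `J 0 = e^{b/α} E₁(b/α)`. Together with the recurrence
`z E_h(z) + h E_{h+1}(z) = e^{-z}` (one more integration by parts) this yields
`J n = n! e^{b/α} b^{-n} E_{n+1}(b/α)`, and unrolling the recurrence for `L` produces the sum.
-/

open MeasureTheory

/-- The generalized exponential integral `E_h(z) = ∫_1^∞ e^{-z t} / t^h dt`. -/
noncomputable def expInt (h : ℕ) (z : ℝ) : ℝ :=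
  ∫ t in Set.Ioi (1 : ℝ), Real.exp (-z * t) / t ^ h

open Real Set
open scoped Nat

theorem integral_comp_add_right_Ioi {E : Type*} [NormedAddCommGroup E] [NormedSpace ℝ E]
    (f : ℝ → E) (a d : ℝ) : ∫ x in Ioi a, f (x + d) = ∫ x in Ioi (a + d), f x := by
  rw [← integral_indicator measurableSet_Ioi, ← integral_indicator measurableSet_Ioi,
    ← integral_add_right_eq_self ((Ioi (a + d)).indicator f) d]
  congr 1 with x
  simp [indicator]

theorem integral_Ioi_eq_neg_of_hasDerivAt_of_integrableOn {E : Type*} [NormedAddCommGroup E]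
    [NormedSpace ℝ E] [CompleteSpace E] {f f' : ℝ → E} {a : ℝ}
    (hderiv : ∀ x ∈ Ici a, HasDerivAt f (f' x) x) (hf : IntegrableOn f (Ioi a))
    (hf' : IntegrableOn f' (Ioi a)) : ∫ x in Ioi a, f' x = -f a := by
  have hlim := tendsto_zero_of_hasDerivAt_of_integrableOn_Ioi
    (fun x hx => hderiv x (mem_Ici_of_Ioi hx)) hf' hf
  simpa using integral_Ioi_of_hasDerivAt_of_tendsto' hderiv hf' hlim

theorem integrableOn_pow_mul_exp_neg_mul_Ioi (n : ℕ) {c : ℝ} (hc : 0 < c) :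
    IntegrableOn (fun x : ℝ => x ^ n * exp (-c * x)) (Ioi 0) := by
  simpa [rpow_natCast] using integrableOn_rpow_mul_exp_neg_mul_rpow (p := 1) (s := n)
    (neg_one_lt_zero.trans_le n.cast_nonneg) one_pos hc

theorem integral_pow_mul_exp_neg_mul_Ioi (n : ℕ) {c : ℝ} (hc : 0 < c) :
    ∫ x in Ioi (0 : ℝ), x ^ n * exp (-c * x) = n ! / c ^ (n + 1) := by
  have h := integral_rpow_mul_exp_neg_mul_Ioi (a := n + 1) (by positivity) hc
  simp only [add_sub_cancel_right, rpow_natCast, Gamma_nat_eq_factorial, neg_mul] at h ⊢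
  rw [h, ← Nat.cast_succ, rpow_natCast, one_div, inv_pow, inv_mul_eq_div]

theorem integrableOn_Ioi_of_abs_le_mul_pow_mul_exp {f : ℝ → ℝ} {a c C : ℝ} (n : ℕ)
    (ha : 0 ≤ a) (hc : 0 < c) (hf : ContinuousOn f (Ioi a))
    (hle : ∀ x ∈ Ioi a, |f x| ≤ C * (x ^ n * exp (-c * x))) : IntegrableOn f (Ioi a) :=
  (((integrableOn_pow_mul_exp_neg_mul_Ioi n hc).mono_set (Ioi_subset_Ioi ha)).const_mul C).mono'
    (hf.aestronglyMeasurable measurableSet_Ioi)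
    (ae_restrict_of_forall_mem measurableSet_Ioi hle)

theorem integrableOn_exp_neg_mul_div_pow_Ioi_one (h : ℕ) {z : ℝ} (hz : 0 < z) :
    IntegrableOn (fun t : ℝ => exp (-z * t) / t ^ h) (Ioi 1) := by
  refine integrableOn_Ioi_of_abs_le_mul_pow_mul_exp (C := 1) 0 zero_le_one hz ?_ fun t ht => ?_
  · exact ContinuousOn.div (by fun_prop) (by fun_prop) fun t ht => by
      have : (0 : ℝ) < t := one_pos.trans ht
      positivity
  · have ht : (1 : ℝ) ≤ t := le_of_lt ht
    rw [abs_of_nonneg (by positivity), one_mul, pow_zero, one_mul]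
    exact div_le_self (exp_pos _).le (one_le_pow₀ ht)

theorem mul_expInt_add_mul_expInt_succ (h : ℕ) {z : ℝ} (hz : 0 < z) :
    z * expInt h z + h * expInt (h + 1) z = exp (-z) := by
  have hderiv : ∀ t ∈ Ici (1 : ℝ), HasDerivAt (fun t => exp (-z * t) / t ^ h)
      (-(z * (exp (-z * t) / t ^ h) + h * (exp (-z * t) / t ^ (h + 1)))) t := by
    intro t ht
    have ht : t ≠ 0 := (one_pos.trans_le ht).ne'
    refine (((hasDerivAt_id t).const_mul (-z)).exp.div (hasDerivAt_pow h t)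
      (pow_ne_zero h ht)).congr_deriv ?_
    rcases h with _ | h
    · simp [mul_comm]
    · field_simp
      push_cast [id]
      ring
  have hE := fun k => integrableOn_exp_neg_mul_div_pow_Ioi_one k hz
  have hftc := integral_Ioi_eq_neg_of_hasDerivAt_of_integrableOn hderiv (hE h)
    (((hE h).const_mul z).add ((hE (h + 1)).const_mul (h : ℝ))).neg
  rwa [integral_neg, integral_add ((hE h).const_mul z) ((hE (h + 1)).const_mul _),
    integral_const_mul, integral_const_mul, mul_one, one_pow, div_one, neg_inj] at hftc

theorem integral_div_one_add_mul_mul_exp {α : ℝ} (hα : 0 < α) (b : ℝ) :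
    ∫ l in Ioi (0 : ℝ), α / (1 + α * l) * exp (-b * l) = exp (b / α) * expInt 1 (b / α) := by
  set g : ℝ → ℝ := fun t => exp (-(b / α) * t) / t ^ 1
  have hg : ∀ l ∈ Ioi (0 : ℝ),
      α / (1 + α * l) * exp (-b * l) = α * exp (b / α) * g (α * l + 1) := by
    intro l hl
    have hl : 0 < l := hl
    have hexp : -(b / α) * (α * l + 1) = -b * l + -(b / α) := by field_simp; ring
    simp only [g, pow_one, hexp, exp_add, exp_neg]
    field_simp
    ring
  rw [setIntegral_congr_fun measurableSet_Ioi hg, integral_const_mul,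
    integral_comp_mul_left_Ioi (fun u => g (u + 1)) 0 hα, mul_zero, integral_comp_add_right_Ioi,
    zero_add, expInt, smul_eq_mul]
  simp only [g]
  field_simp

theorem integrableOn_mul_pow_div_one_add_mul_mul_exp {α b : ℝ} (hα : 0 ≤ α) (hb : 0 < b)
    (q : ℕ) : IntegrableOn (fun l : ℝ => α * l ^ q / (1 + α * l) * exp (-b * l)) (Ioi 0) := by
  refine integrableOn_Ioi_of_abs_le_mul_pow_mul_exp (C := α) q le_rfl hb ?_ fun l hl => ?_
  · exact ContinuousOn.mul (ContinuousOn.div (by fun_prop) (by fun_prop) fun l hl => by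
      have : (0 : ℝ) < l := hl
      positivity) (by fun_prop)
  · have hl : 0 < l := hl
    rw [abs_of_nonneg (by positivity), ← mul_assoc]
    gcongr
    exact div_le_self (by positivity) (le_add_of_nonneg_right (by positivity))

theorem integral_mul_pow_div_one_add_mul_mul_exp {α b : ℝ} (hα : 0 < α) (hb : 0 < b) (q : ℕ) :
    ∫ l in Ioi (0 : ℝ), α * l ^ q / (1 + α * l) * exp (-b * l) =
      q ! * exp (b / α) / b ^ q * expInt (q + 1) (b / α) := by
  induction q with
  | zero => simpa using integral_div_one_add_mul_mul_exp hα b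
  | succ q ih =>
    have hsplit : ∀ l ∈ Ioi (0 : ℝ), α * l ^ (q + 1) / (1 + α * l) * exp (-b * l) =
        l ^ q * exp (-b * l) - α⁻¹ * (α * l ^ q / (1 + α * l) * exp (-b * l)) := by
      intro l hl
      have hl : 0 < l := hl
      field_simp
      ring
    rw [setIntegral_congr_fun measurableSet_Ioi hsplit,
      integral_sub (integrableOn_pow_mul_exp_neg_mul_Ioi q hb)
        ((integrableOn_mul_pow_div_one_add_mul_mul_exp hα.le hb q).const_mul _),
      integral_const_mul, integral_pow_mul_exp_neg_mul_Ioi q hb, ih]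
    have hrec := mul_expInt_add_mul_expInt_succ (q + 1) (div_pos hb hα)
    have hexp : exp (b / α) * exp (-(b / α)) = 1 := by rw [← exp_add, add_neg_cancel, exp_zero]
    push_cast [Nat.factorial_succ] at hrec ⊢
    field_simp at hrec ⊢
    linear_combination (-(b ^ q * exp (b / α))) * hrec - α * b ^ q * hexp

theorem integrableOn_log_one_add_mul_mul_pow_mul_exp {α b : ℝ} (hα : 0 ≤ α) (hb : 0 < b)
    (n : ℕ) : IntegrableOn (fun l : ℝ => log (1 + α * l) * l ^ n * exp (-b * l)) (Ioi 0) := by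
  refine integrableOn_Ioi_of_abs_le_mul_pow_mul_exp (C := α) (n + 1) le_rfl hb ?_ fun l hl => ?_
  · exact ContinuousOn.mul (ContinuousOn.mul (ContinuousOn.log (by fun_prop) fun l hl => by
      have : (0 : ℝ) < l := hl
      positivity) (by fun_prop)) (by fun_prop)
  · have hl : 0 < l := hl
    have hlog : log (1 + α * l) ≤ α * l := by
      simpa using log_le_sub_one_of_pos (show 0 < 1 + α * l by positivity)
    have hlog0 : 0 ≤ log (1 + α * l) := log_nonneg (le_add_of_nonneg_right (by positivity))
    rw [abs_of_nonneg (by positivity)]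
    calc log (1 + α * l) * l ^ n * exp (-b * l) ≤ α * l * l ^ n * exp (-b * l) := by gcongr
      _ = α * (l ^ (n + 1) * exp (-b * l)) := by ring

-- At `n = 0` the truncated `n - 1` is harmless: that term carries the factor `n`.
theorem mul_integral_log_one_add_mul_mul_pow_mul_exp {α b : ℝ} (hα : 0 ≤ α) (hb : 0 < b)
    (n : ℕ) :
    b * ∫ l in Ioi (0 : ℝ), log (1 + α * l) * l ^ n * exp (-b * l) =
      n * (∫ l in Ioi (0 : ℝ), log (1 + α * l) * l ^ (n - 1) * exp (-b * l)) +
        ∫ l in Ioi (0 : ℝ), α * l ^ n / (1 + α * l) * exp (-b * l) := by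
  have hL := integrableOn_log_one_add_mul_mul_pow_mul_exp hα hb
  have hJ := integrableOn_mul_pow_div_one_add_mul_mul_exp hα hb n
  have hderiv : ∀ l ∈ Ici (0 : ℝ), HasDerivAt (fun l => log (1 + α * l) * l ^ n * exp (-b * l))
      (α * l ^ n / (1 + α * l) * exp (-b * l) +
        (n * (log (1 + α * l) * l ^ (n - 1) * exp (-b * l)) -
          b * (log (1 + α * l) * l ^ n * exp (-b * l)))) l := by
    intro l hl
    have hl : 0 < 1 + α * l := by have : (0 : ℝ) ≤ l := hl; positivity
    refine (((((hasDerivAt_id l).const_mul α).const_add 1).log hl.ne').mul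
      (hasDerivAt_pow n l) |>.mul ((hasDerivAt_id l).const_mul (-b)).exp).congr_deriv ?_
    simp only [id, Pi.mul_apply]
    field_simp
    ring
  have hftc := integral_Ioi_eq_neg_of_hasDerivAt_of_integrableOn hderiv (hL n)
    (hJ.add (((hL (n - 1)).const_mul _).sub ((hL n).const_mul b)))
  rw [integral_add hJ, integral_sub, integral_const_mul, integral_const_mul] at hftc
  · simp only [mul_zero, add_zero, log_one, zero_mul, neg_zero] at hftc
    linarith
  exacts [(hL (n - 1)).const_mul _, (hL n).const_mul b,
    ((hL (n - 1)).const_mul _).sub ((hL n).const_mul b)]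

theorem integral_log_one_add_mul_mul_pow_mul_exp {α b : ℝ} (hα : 0 < α) (hb : 0 < b) (n : ℕ) :
    ∫ l in Ioi (0 : ℝ), log (1 + α * l) * l ^ n * exp (-b * l) =
      n ! * exp (b / α) / b ^ (n + 1) * ∑ h ∈ Finset.Icc 1 (n + 1), expInt h (b / α) := by
  have hrec := mul_integral_log_one_add_mul_mul_pow_mul_exp hα.le hb
  induction n with
  | zero =>
    have h0 := hrec 0
    rw [integral_mul_pow_div_one_add_mul_mul_exp hα hb] at h0
    generalize (∫ l in Ioi (0 : ℝ), log (1 + α * l) * l ^ 0 * exp (-b * l)) = L at h0 ⊢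
    simp only [CharP.cast_eq_zero, zero_mul, zero_add, Nat.factorial_zero, Nat.cast_one,
      pow_zero, div_one, pow_one, Finset.Icc_self, Finset.sum_singleton] at h0 ⊢
    field_simp
    linear_combination h0
  | succ n ih =>
    have h1 := hrec (n + 1)
    rw [Nat.add_sub_cancel, ih, integral_mul_pow_div_one_add_mul_mul_exp hα hb] at h1
    generalize (∫ l in Ioi (0 : ℝ), log (1 + α * l) * l ^ (n + 1) * exp (-b * l)) = L at h1 ⊢
    rw [Finset.sum_Icc_succ_top (by omega)]
    push_cast [Nat.factorial_succ] at h1 ⊢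
    field_simp at h1 ⊢
    linear_combination h1

/-- For `α > 0`, `b > 0`, and a positive integer `q`,
`∫_0^∞ ln(1+αλ) λ^{q-1} e^{-bλ} dλ = (q-1)! e^{b/α} b^{-q} ∑_{h=1}^q E_h(b/α)`. -/
theorem integral_log_mul_pow_mul_exp (α b : ℝ) (hα : 0 < α) (hb : 0 < b)
    (q : ℕ) (hq : 1 ≤ q) :
    ∫ l in Set.Ioi (0 : ℝ), Real.log (1 + α * l) * l ^ (q - 1) * Real.exp (-b * l) =
      (Nat.factorial (q - 1) : ℝ) * Real.exp (b / α) * b ^ (-(q : ℤ)) *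
        ∑ h ∈ Finset.Icc 1 q, expInt h (b / α) := by
  obtain ⟨n, rfl⟩ := Nat.exists_eq_add_of_le' hq
  rw [Nat.add_sub_cancel, integral_log_one_add_mul_mul_pow_mul_exp hα hb n, zpow_neg,
    zpow_natCast]
  ring
end

section
/- For positive integers m, n with m ≤ n, nonnegative integer τ = n - m, positive integers i, j ≤ m, and real x with 0 < x < 1, the series S₁(x) = ∑_{t=0}^∞ x^t (τ+t+i-1)!(τ+t+j-1)!/(t!(τ+t)!) converges and equals Γ(τ+i)·x^{i-1}/(1-x)^{τ+i+j-1} · ∑_{b=0}^{i-1} C(i-1,b)·((1-x)/x)^b · (τ+i-b)_{j-1}, where (a)_r denotes the Pochhammer symbol Γ(a+r)/Γ(a). -/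
/-!
Induction on `i`. For `i = 1` the factor `(τ + t)!` cancels and `S₁` is `(τ + j - 1)!` times the
negative binomial series `∑ C(t + τ + j - 1, t) xᵗ = (1 - x)^-(τ + j)`. Passing from `i` to `i + 1`
multiplies the `t`-th term by `(τ + i) + t`, and `t xᵗ / t! = x · x^(t-1) / (t-1)!` turns the
`t`-part into `x` times the series for `τ + 1`. Pascal's rule shows that the closed form obeys the
same recurrence.
-/

/-- The Pochhammer symbol (rising factorial) `(a)_r = a(a+1)⋯(a+r-1)`, `(a)_0 = 1`. -/
noncomputable def poch (a : ℝ) (r : ℕ) : ℝ := ∏ k ∈ Finset.range r, (a + k)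

open Finset Nat

lemma factorial_mul_poch (c r : ℕ) : (c ! : ℝ) * poch (c + 1) r = (c + r)! := by
  rw [← factorial_mul_ascFactorial, ascFactorial_eq_prod_range, poch]
  push_cast
  rfl

namespace S1

/- Throughout, `a = i - 1` and `c = j - 1`. `poly` is the finite sum of the theorem times `x ^ a`,
indexed by `b + p = a`, so that it needs neither `x ≠ 0` nor truncated subtraction. -/

noncomputable def term (x : ℝ) (τ a c t : ℕ) : ℝ :=
  x ^ t * ((τ + t + a)! : ℝ) * ((τ + t + c)! : ℝ) / ((t ! : ℝ) * ((τ + t)! : ℝ))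

noncomputable def poly (x : ℝ) (τ a c : ℕ) : ℝ :=
  ∑ bp ∈ antidiagonal a, (a.choose bp.1 : ℝ) * ((1 - x) ^ bp.1 * x ^ bp.2 *
    poch ((τ + 1 + bp.2 : ℕ) : ℝ) c)

noncomputable def value (x : ℝ) (τ a c : ℕ) : ℝ :=
  (τ + a)! / (1 - x) ^ (τ + a + c + 1) * poly x τ a c

variable (x : ℝ) (τ a c : ℕ)

lemma term_zero_left (t : ℕ) :
    term x τ 0 c t = (τ + c)! * ((t + (τ + c)).choose (τ + c) * x ^ t) := by
  have h := add_choose_mul_factorial_mul_factorial t (τ + c)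
  rw [term, add_zero, show τ + t + c = t + (τ + c) by omega, ← h]
  push_cast
  field_simp

lemma term_succ_left (t : ℕ) :
    term x τ (a + 1) c t = ((τ + a + 1 : ℕ) + t) * term x τ a c t := by
  rw [term, term, show τ + t + (a + 1) = τ + t + a + 1 by omega, factorial_succ]
  push_cast
  ring

lemma succ_mul_term_succ (t : ℕ) :
    (t + 1 : ℝ) * term x τ a c (t + 1) = x * term x (τ + 1) a c t := by
  simp only [term, show τ + (t + 1) = τ + 1 + t by omega, factorial_succ]
  push_cast
  field_simp
  ring

lemma poly_zero_left : poly x τ 0 c = poch (τ + 1) c := by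
  simp [poly]

lemma poly_succ_left :
    poly x τ (a + 1) c = (1 - x) * poly x τ a c + x * poly x (τ + 1) a c := by
  rw [poly, sum_antidiagonal_choose_succ_mul (fun b p => (1 - x) ^ b * x ^ p *
    poch ((τ + 1 + p : ℕ) : ℝ) c) a, poly, poly, mul_sum, mul_sum, add_comm]
  congr 1 <;> refine sum_congr rfl fun bp hbp => ?_
  · rw [Nat.choose_symm_of_eq_add (mem_antidiagonal.1 hbp).symm]
    ring
  · rw [show τ + 1 + (bp.2 + 1) = τ + 1 + 1 + bp.2 by omega]
    ring

lemma value_succ_left (hx : x ≠ 1) :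
    value x τ (a + 1) c = (τ + a + 1 : ℕ) * value x τ a c + x * value x (τ + 1) a c := by
  have hx' : 1 - x ≠ 0 := sub_ne_zero.2 hx.symm
  simp only [value, poly_succ_left, show τ + (a + 1) = τ + a + 1 by omega,
    show τ + 1 + a = τ + a + 1 by omega, factorial_succ, pow_succ]
  push_cast
  field_simp
  ring

lemma hasSum_term_zero_left (hx : ‖x‖ < 1) : HasSum (term x τ 0 c) (value x τ 0 c) := by
  have h := (hasSum_choose_mul_geometric_of_norm_lt_one (τ + c) hx).mul_left ((τ + c)! : ℝ)
  have hv : value x τ 0 c = (τ + c)! * (1 / (1 - x) ^ (τ + c + 1)) := by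
    rw [value, poly_zero_left, ← factorial_mul_poch τ c, add_zero]
    ring
  rw [hv]
  exact h.congr_fun (term_zero_left x τ c)

lemma hasSum_nat_mul_term {v : ℝ} (h : HasSum (term x (τ + 1) a c) v) :
    HasSum (fun t : ℕ => t * term x τ a c t) (x * v) := by
  have h' : HasSum (fun t : ℕ => ((t + 1 : ℕ) : ℝ) * term x τ a c (t + 1)) (x * v) := by
    refine (h.mul_left x).congr_fun fun t => ?_
    rw [Nat.cast_succ, succ_mul_term_succ]
  have h0 : ((0 : ℕ) : ℝ) * term x τ a c 0 = 0 := by rw [Nat.cast_zero, zero_mul]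
  simpa only [sum_range_one, h0, add_zero] using
    (hasSum_nat_add_iff (f := fun t : ℕ => (t : ℝ) * term x τ a c t) 1).1 h'

theorem hasSum_term (hx : ‖x‖ < 1) : HasSum (term x τ a c) (value x τ a c) := by
  induction a generalizing τ with
  | zero => exact hasSum_term_zero_left x τ c hx
  | succ a ih =>
    have hx1 : x ≠ 1 := ((le_abs_self x).trans_lt hx).ne
    rw [value_succ_left x τ a c hx1]
    refine (((ih τ).mul_left _).add (hasSum_nat_mul_term x τ a c (ih (τ + 1)))).congr_fun
      fun t => ?_
    rw [term_succ_left]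
    ring

lemma poly_eq_sum_range (hx : x ≠ 0) :
    poly x τ a c = x ^ a * ∑ b ∈ range (a + 1),
      (a.choose b : ℝ) * ((1 - x) / x) ^ b * poch ((τ : ℝ) + (a + 1 : ℕ) - b) c := by
  rw [poly, sum_antidiagonal_eq_sum_range_succ (fun b p => (a.choose b : ℝ) * ((1 - x) ^ b *
    x ^ p * poch ((τ + 1 + p : ℕ) : ℝ) c)) a, mul_sum]
  refine sum_congr rfl fun b hb => ?_
  have hba : b ≤ a := Nat.lt_succ_iff.1 (mem_range.1 hb)
  rw [show ((τ + 1 + (a - b) : ℕ) : ℝ) = τ + (a + 1 : ℕ) - b by push_cast [Nat.cast_sub hba]; ring,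
    div_pow, ← pow_sub_mul_pow x hba]
  field_simp

end S1

theorem hasSum_S1_general (τ : ℕ)
    (i j : ℕ) (hi1 : 1 ≤ i) (hj1 : 1 ≤ j)
    (x : ℝ) (hx0 : 0 < x) (hx1 : x < 1) :
    HasSum (fun t : ℕ =>
        x ^ t * (Nat.factorial (τ + t + i - 1) : ℝ) * (Nat.factorial (τ + t + j - 1) : ℝ) /
          ((Nat.factorial t : ℝ) * (Nat.factorial (τ + t) : ℝ)))
      (Real.Gamma (τ + i) * x ^ (i - 1) / (1 - x) ^ (τ + i + j - 1) *
        ∑ b ∈ Finset.range i,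
          (Nat.choose (i - 1) b : ℝ) * ((1 - x) / x) ^ b * poch ((τ : ℝ) + i - b) (j - 1)) := by
  obtain ⟨a, rfl⟩ : ∃ a, i = a + 1 := ⟨i - 1, by omega⟩
  obtain ⟨c, rfl⟩ : ∃ c, j = c + 1 := ⟨j - 1, by omega⟩
  have hx : ‖x‖ < 1 := by rwa [Real.norm_of_nonneg hx0.le]
  convert S1.hasSum_term x τ a c hx using 1
  · funext t
    rw [S1.term, show τ + t + (a + 1) - 1 = τ + t + a by omega,
      show τ + t + (c + 1) - 1 = τ + t + c by omega]
  · rw [S1.value, S1.poly_eq_sum_range x τ a c hx0.ne', add_tsub_cancel_right,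
      add_tsub_cancel_right,
      show (τ : ℝ) + (a + 1 : ℕ) = (τ + a : ℕ) + 1 by push_cast; ring, Real.Gamma_nat_eq_factorial,
      show τ + (a + 1) + (c + 1) - 1 = τ + a + c + 1 by omega]
    ring

/-- For `1 ≤ m ≤ n`, `τ = n - m`, `1 ≤ i, j ≤ m` and `0 < x < 1`, the series
`S₁(x) = ∑_{t=0}^∞ x^t (τ+t+i-1)!(τ+t+j-1)!/(t!(τ+t)!)` converges to
`Γ(τ+i) x^{i-1}/(1-x)^{τ+i+j-1} ∑_{b=0}^{i-1} C(i-1,b)((1-x)/x)^b (τ+i-b)_{j-1}`. -/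
theorem hasSum_S1 (m n : ℕ) (hm : 1 ≤ m) (hmn : m ≤ n) (τ : ℕ) (hτ : τ = n - m)
    (i j : ℕ) (hi1 : 1 ≤ i) (him : i ≤ m) (hj1 : 1 ≤ j) (hjm : j ≤ m)
    (x : ℝ) (hx0 : 0 < x) (hx1 : x < 1) :
    HasSum (fun t : ℕ =>
        x ^ t * (Nat.factorial (τ + t + i - 1) : ℝ) * (Nat.factorial (τ + t + j - 1) : ℝ) /
          ((Nat.factorial t : ℝ) * (Nat.factorial (τ + t) : ℝ)))
      (Real.Gamma (τ + i) * x ^ (i - 1) / (1 - x) ^ (τ + i + j - 1) *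
        ∑ b ∈ Finset.range i,
          (Nat.choose (i - 1) b : ℝ) * ((1 - x) / x) ^ b * poch ((τ : ℝ) + i - b) (j - 1)) :=
  hasSum_S1_general τ i j hi1 hj1 x hx0 hx1
end
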